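/- arXiv:1811.12767 — 3 statements merged into one kernel-verified Lean document; each statement's English description precedes it below -/
import Mathlib

section
/- Let Λ : ℝ → ℂ be a trigonometric polynomial, Λ(s) = ∑_{k ∈ K} a_k exp(i k s), where K is a finite set of integers and a_k ∈ ℂ. Let M be a positive integer, Δs = 2π/M, and let b_1,…,b_σ ∈ ℝ and c_1,…,c_σ ∈ ℝ be the weights and abscissas of a consistent Runge–Kutta method, i.e. ∑_{j=1}^σ b_j = 1. Assume that for every nonzero k ∈ K one has exp(i k Δs) ≠ 1 (which holds whenever Δs is sufficiently small). Then the Runge–Kutta quadrature approximation y_{m+1} = y_m + Δs ∑_{j=1}^σ b_j Λ((m + c_j)Δs), y_0 given, satisfies y_M = y_0 + ∫_0^{2π} Λ(s) ds; that is, the numerical solution is exact at s = 2π. -/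
/-!
Summing the recursion telescopes `y M - y 0` into the Runge–Kutta quadrature sum. On the grid
`(m + c) Δs`, the mode `exp (i k s)` is a geometric progression with ratio `exp (i k Δs)`, an
`M`-th root of unity since `M Δs = 2π`; it sums to zero unless the ratio is `1`, which the
non-aliasing hypothesis excludes for `k ≠ 0`. Hence every stage sees only the constant mode,
with weight `M`, and consistency turns the quadrature into `2π a₀`, which is also the integral.
-/

open Real Finset

theorem geom_sum_eq_zero_of_pow_eq_one {R : Type*} [DivisionRing R] {z : R} {n : ℕ}
    (hz : z ≠ 1) (hzn : z ^ n = 1) : ∑ i ∈ range n, z ^ i = 0 := by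
  rw [geom_sum_eq hz, hzn, sub_self, zero_div]

theorem sum_range_exp_int_mul_grid {h : ℝ} {M : ℕ} (hhM : h * M = 2 * π) (k : ℤ)
    (hk : k ≠ 0 → Complex.exp (Complex.I * k * h) ≠ 1) (c : ℝ) :
    ∑ m ∈ range M, Complex.exp (Complex.I * k * (((m : ℝ) + c) * h : ℝ)) =
      if k = 0 then (M : ℂ) else 0 := by
  split_ifs with hk0
  · simp [hk0]
  have hshift : ∀ m : ℕ, Complex.exp (Complex.I * k * (((m : ℝ) + c) * h : ℝ)) =
      Complex.exp (Complex.I * k * (c * h)) * Complex.exp (Complex.I * k * h) ^ m := by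
    intro m
    rw [← Complex.exp_nat_mul, ← Complex.exp_add]
    push_cast
    ring_nf
  have hperiod : Complex.exp (Complex.I * k * h) ^ M = 1 := by
    have hhMC : (h : ℂ) * M = 2 * π := by exact_mod_cast hhM
    rw [← Complex.exp_nat_mul, ← Complex.exp_int_mul_two_pi_mul_I k]
    congr 1
    linear_combination (Complex.I * k) * hhMC
  simp_rw [hshift, ← mul_sum, geom_sum_eq_zero_of_pow_eq_one (hk hk0) hperiod, mul_zero]

theorem integral_exp_int_mul_I (k : ℤ) :
    ∫ s in (0 : ℝ)..(2 * π), Complex.exp (Complex.I * k * s) =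
      if k = 0 then 2 * (π : ℂ) else 0 := by
  split_ifs with hk0
  · simp [hk0]
  have hIk : Complex.I * k ≠ 0 := mul_ne_zero Complex.I_ne_zero (Int.cast_ne_zero.mpr hk0)
  rw [integral_exp_mul_complex hIk]
  have hturn : Complex.I * k * (2 * π) = k * (2 * π * Complex.I) := by ring
  push_cast
  rw [hturn, Complex.exp_int_mul_two_pi_mul_I, mul_zero, Complex.exp_zero, sub_self, zero_div]

section TrigPoly

variable {K : Finset ℤ} {a : ℤ → ℂ} {Λ : ℝ → ℂ}

theorem integral_trigPoly
    (hΛ : ∀ s : ℝ, Λ s = ∑ k ∈ K, a k * Complex.exp (Complex.I * (k : ℂ) * (s : ℂ))) :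
    ∫ s in (0 : ℝ)..(2 * π), Λ s = 2 * π * ∑ k ∈ K, if k = 0 then a k else 0 := by
  have hmode : ∀ k : ℤ, IntervalIntegrable (fun s : ℝ => Complex.exp (Complex.I * k * s))
      MeasureTheory.volume 0 (2 * π) := fun k =>
    (Complex.continuous_exp.comp (by fun_prop)).intervalIntegrable _ _
  simp_rw [hΛ]
  rw [intervalIntegral.integral_finsetSum fun k _ => (hmode k).const_mul (a k), mul_sum]
  refine sum_congr rfl fun k _ => ?_
  rw [intervalIntegral.integral_const_mul, integral_exp_int_mul_I]
  split_ifs <;> ring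

theorem sum_range_trigPoly_grid
    (hΛ : ∀ s : ℝ, Λ s = ∑ k ∈ K, a k * Complex.exp (Complex.I * (k : ℂ) * (s : ℂ)))
    {h : ℝ} {M : ℕ} (hhM : h * M = 2 * π)
    (halias : ∀ k ∈ K, k ≠ 0 → Complex.exp (Complex.I * (k : ℂ) * (h : ℂ)) ≠ 1)
    (c : ℝ) :
    ∑ m ∈ range M, Λ (((m : ℝ) + c) * h) = M * ∑ k ∈ K, if k = 0 then a k else 0 := by
  simp_rw [hΛ]
  rw [sum_comm, mul_sum]
  refine sum_congr rfl fun k hk => ?_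
  rw [← mul_sum, sum_range_exp_int_mul_grid hhM k (halias k hk) c]
  split_ifs <;> ring

theorem sum_range_rk_trigPoly
    (hΛ : ∀ s : ℝ, Λ s = ∑ k ∈ K, a k * Complex.exp (Complex.I * (k : ℂ) * (s : ℂ)))
    {h : ℝ} {M : ℕ} (hhM : h * M = 2 * π)
    (halias : ∀ k ∈ K, k ≠ 0 → Complex.exp (Complex.I * (k : ℂ) * (h : ℂ)) ≠ 1)
    {σ : ℕ} (b c : Fin σ → ℝ) (hb : ∑ j, b j = 1) :
    ∑ m ∈ range M, (h : ℂ) * ∑ j, (b j : ℂ) * Λ (((m : ℝ) + c j) * h) =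
      2 * π * ∑ k ∈ K, if k = 0 then a k else 0 := by
  have hbC : ∑ j, (b j : ℂ) = 1 := by exact_mod_cast hb
  have hhMC : (h : ℂ) * M = 2 * π := by exact_mod_cast hhM
  calc ∑ m ∈ range M, (h : ℂ) * ∑ j, (b j : ℂ) * Λ (((m : ℝ) + c j) * h)
      = h * ∑ j, (b j : ℂ) * ∑ m ∈ range M, Λ (((m : ℝ) + c j) * h) := by
        simp_rw [mul_sum]
        rw [sum_comm]
    _ = h * M * (∑ j, (b j : ℂ)) * ∑ k ∈ K, if k = 0 then a k else 0 := by
        simp_rw [sum_range_trigPoly_grid hΛ hhM halias, ← sum_mul]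
        ring
    _ = 2 * π * ∑ k ∈ K, if k = 0 then a k else 0 := by rw [hhMC, hbC, mul_one]

end TrigPoly

theorem rk_exact_trig_poly_general (K : Finset ℤ) (a : ℤ → ℂ)
    (Λ : ℝ → ℂ)
    (hΛ : ∀ s : ℝ, Λ s = ∑ k ∈ K, a k * Complex.exp (Complex.I * (k : ℂ) * (s : ℂ)))
    (M : ℕ) (hM : 0 < M) (Δs : ℝ) (hΔs : Δs = 2 * π / M)
    (σ : ℕ) (b c : Fin σ → ℝ)
    (hconsistent : ∑ j, b j = 1)
    (halias : ∀ k ∈ K, k ≠ 0 → Complex.exp (Complex.I * (k : ℂ) * (Δs : ℂ)) ≠ 1)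
    (y : ℕ → ℂ)
    (hrec : ∀ m : ℕ, y (m + 1) =
      y m + (Δs : ℂ) * ∑ j, (b j : ℂ) * Λ (((m : ℝ) + c j) * Δs)) :
    y M = y 0 + ∫ s in (0:ℝ)..(2 * π), Λ s := by
  have hΔsM : Δs * M = 2 * π := by
    rw [hΔs, div_mul_cancel₀ _ (Nat.cast_ne_zero.mpr hM.ne')]
  have htelescope : y M - y 0 =
      ∑ m ∈ range M, (Δs : ℂ) * ∑ j, (b j : ℂ) * Λ (((m : ℝ) + c j) * Δs) := by
    rw [← sum_range_sub]
    exact sum_congr rfl fun m _ => by rw [hrec m, add_sub_cancel_left]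
  rw [← sub_eq_iff_eq_add', htelescope, sum_range_rk_trigPoly hΛ hΔsM halias b c hconsistent,
    integral_trigPoly hΛ]

/-- For a trigonometric polynomial `Λ(s) = ∑_{k ∈ K} a_k exp(iks)`, a consistent Runge–Kutta
quadrature with step `Δs = 2π/M`, such that `exp(ikΔs) ≠ 1` for every nonzero `k ∈ K`,
is exact at `s = 2π`: `y M = y 0 + ∫_0^{2π} Λ`. -/
theorem rk_exact_trig_poly (K : Finset ℤ) (a : ℤ → ℂ)
    (Λ : ℝ → ℂ)
    (hΛ : ∀ s : ℝ, Λ s = ∑ k ∈ K, a k * Complex.exp (Complex.I * (k : ℂ) * (s : ℂ)))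
    (M : ℕ) (hM : 0 < M) (Δs : ℝ) (hΔs : Δs = 2 * π / M)
    (σ : ℕ) (hσ : 0 < σ) (b c : Fin σ → ℝ)
    (hconsistent : ∑ j, b j = 1)
    (halias : ∀ k ∈ K, k ≠ 0 → Complex.exp (Complex.I * (k : ℂ) * (Δs : ℂ)) ≠ 1)
    (y : ℕ → ℂ)
    (hrec : ∀ m : ℕ, y (m + 1) =
      y m + (Δs : ℂ) * ∑ j, (b j : ℂ) * Λ (((m : ℝ) + c j) * Δs)) :
    y M = y 0 + ∫ s in (0:ℝ)..(2 * π), Λ s :=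
  rk_exact_trig_poly_general K a Λ hΛ M hM Δs hΔs σ b c hconsistent halias y hrec
end

section
/- Let Λ : ℝ → ℂ be a trigonometric polynomial, Λ(s) = ∑_{k ∈ K} a_k exp(i k s), where K is a finite set of integers and a_k ∈ ℂ. Let M be a positive integer, Δs = 2π/M, and let b_1,…,b_σ, c_1,…,c_σ ∈ ℝ be the weights and abscissas of a consistent Runge–Kutta method (∑_{j=1}^σ b_j = 1). Assume that for every nonzero k ∈ K one has exp(i k Δs) ≠ 1. Then for every positive integer n the Runge–Kutta quadrature approximation y_{m+1} = y_m + Δs ∑_{j=1}^σ b_j Λ((m + c_j)Δs) satisfies y_{nM} = y_0 + ∫_0^{2πn} Λ(s) ds; that is, the numerical solution is exact after any whole number of periods. -/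
/-!
Both the Runge–Kutta increment over `N = nM` steps and the integral are linear in `Λ`, so it
suffices to treat a single mode `exp (i k s)`. For `k = 0` both sides equal `2πn` by consistency.
For `k ≠ 0` the integral over whole periods vanishes, and the quadrature sum factors as the
geometric sum `∑_{m < N} r ^ m` with `r = exp (i k Δs)` times a sum over the stages; since
`r ^ N = 1` and `r ≠ 1` (no aliasing), the geometric sum vanishes too.
-/

open Real

theorem integral_exp_mul_complex_eq_zero {z : ℂ} {T : ℝ} (hz : z ≠ 0)
    (hzT : Complex.exp (z * T) = 1) :
    ∫ s in (0 : ℝ)..T, Complex.exp (z * s) = 0 := by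
  simp [integral_exp_mul_complex hz, hzT]

section rkQuadrature

open Complex Finset

noncomputable def rkQuadrature {σ : ℕ} (b c : Fin σ → ℝ) (h : ℝ) (N : ℕ) (f : ℝ → ℂ) : ℂ :=
  h * ∑ m ∈ range N, ∑ j, b j * f ((m + c j) * h)

variable {σ : ℕ} (b c : Fin σ → ℝ) (h : ℝ) (N : ℕ)

theorem eq_add_rkQuadrature_of_succ {f : ℝ → ℂ} {y : ℕ → ℂ}
    (hy : ∀ m : ℕ, y (m + 1) = y m + h * ∑ j, b j * f ((m + c j) * h)) :
    y N = y 0 + rkQuadrature b c h N f := by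
  rw [rkQuadrature, mul_sum, ← sub_eq_iff_eq_add', ← sum_range_sub y]
  exact sum_congr rfl fun m _ => by rw [hy m, add_sub_cancel_left]

theorem rkQuadrature_finsetSum {ι : Type*} (K : Finset ι) (a : ι → ℂ) (g : ι → ℝ → ℂ) :
    rkQuadrature b c h N (fun s => ∑ k ∈ K, a k * g k s) =
      ∑ k ∈ K, a k * rkQuadrature b c h N (g k) := by
  simp only [rkQuadrature, mul_sum]
  simp_rw [sum_comm (t := K)]
  exact sum_congr rfl fun k _ => sum_congr rfl fun m _ => sum_congr rfl fun j _ => by ring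

theorem rkQuadrature_one : rkQuadrature b c h N (fun _ => 1) = h * N * ∑ j, (b j : ℂ) := by
  simp [rkQuadrature, mul_assoc]

theorem rkQuadrature_exp_eq_zero {z : ℂ} (hz : exp (z * h) ≠ 1)
    (hzT : exp (z * (N * h)) = 1) :
    rkQuadrature b c h N (fun s => exp (z * s)) = 0 := by
  have hsplit (m : ℕ) (j : Fin σ) :
      exp (z * ((m + c j) * h : ℝ)) = exp (z * h) ^ m * exp (z * (c j * h)) := by
    rw [← Complex.exp_nat_mul, ← Complex.exp_add]
    push_cast
    ring_nf
  have hgeom : ∑ m ∈ range N, exp (z * h) ^ m = 0 := by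
    rw [geom_sum_eq hz, ← Complex.exp_nat_mul, mul_left_comm, hzT, sub_self, zero_div]
  simp only [rkQuadrature, hsplit, mul_left_comm _ (exp (z * h) ^ _), ← mul_sum, ← sum_mul,
    hgeom, zero_mul, mul_zero]

theorem rkQuadrature_exp_eq_integral (hb : ∑ j, b j = 1) {z : ℂ}
    (hz : z ≠ 0 → exp (z * h) ≠ 1) (hzT : exp (z * (N * h)) = 1) :
    rkQuadrature b c h N (fun s => exp (z * s)) = ∫ s in (0 : ℝ)..N * h, exp (z * s) := by
  rcases eq_or_ne z 0 with rfl | hz0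
  · simp [rkQuadrature_one, ← ofReal_sum, hb, mul_comm]
  · rw [rkQuadrature_exp_eq_zero b c h N (hz hz0) hzT,
      integral_exp_mul_complex_eq_zero hz0 (by exact_mod_cast hzT)]

end rkQuadrature

theorem rk_exact_trig_poly_periods_general (K : Finset ℤ) (a : ℤ → ℂ)
    (Λ : ℝ → ℂ)
    (hΛ : ∀ s : ℝ, Λ s = ∑ k ∈ K, a k * Complex.exp (Complex.I * (k : ℂ) * (s : ℂ)))
    (M : ℕ) (hM : 0 < M) (Δs : ℝ) (hΔs : Δs = 2 * π / M)
    (σ : ℕ) (b c : Fin σ → ℝ)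
    (hconsistent : ∑ j, b j = 1)
    (halias : ∀ k ∈ K, k ≠ 0 → Complex.exp (Complex.I * (k : ℂ) * (Δs : ℂ)) ≠ 1)
    (y : ℕ → ℂ)
    (hrec : ∀ m : ℕ, y (m + 1) =
      y m + (Δs : ℂ) * ∑ j, (b j : ℂ) * Λ (((m : ℝ) + c j) * Δs))
    (n : ℕ) :
    y (n * M) = y 0 + ∫ s in (0:ℝ)..(2 * π * n), Λ s := by
  have hT : ((n * M : ℕ) : ℝ) * Δs = 2 * π * n := by
    rw [hΔs]; push_cast; field_simp
  have hperiod (k : ℤ) :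
      Complex.exp (Complex.I * k * ((n * M : ℕ) * Δs : ℝ)) = 1 := by
    rw [hT, ← Complex.exp_int_mul_two_pi_mul_I (k * n)]
    push_cast; ring_nf
  rw [eq_add_rkQuadrature_of_succ b c Δs (n * M) hrec, funext hΛ, rkQuadrature_finsetSum, ← hT,
    intervalIntegral.integral_finsetSum fun k _ =>
      (by fun_prop : Continuous _).intervalIntegrable _ _]
  congr 1
  refine Finset.sum_congr rfl fun k hk => ?_
  rw [intervalIntegral.integral_const_mul, rkQuadrature_exp_eq_integral b c Δs _ hconsistent]
  · exact fun hk0 => halias k hk (by rintro rfl; simp at hk0)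
  · exact_mod_cast hperiod k

/-- For a trigonometric polynomial `Λ`, a consistent Runge–Kutta quadrature with step
`Δs = 2π/M` avoiding aliasing is exact after any whole number `n` of periods:
`y (n*M) = y 0 + ∫_0^{2πn} Λ`. -/
theorem rk_exact_trig_poly_periods (K : Finset ℤ) (a : ℤ → ℂ)
    (Λ : ℝ → ℂ)
    (hΛ : ∀ s : ℝ, Λ s = ∑ k ∈ K, a k * Complex.exp (Complex.I * (k : ℂ) * (s : ℂ)))
    (M : ℕ) (hM : 0 < M) (Δs : ℝ) (hΔs : Δs = 2 * π / M)
    (σ : ℕ) (hσ : 0 < σ) (b c : Fin σ → ℝ)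
    (hconsistent : ∑ j, b j = 1)
    (halias : ∀ k ∈ K, k ≠ 0 → Complex.exp (Complex.I * (k : ℂ) * (Δs : ℂ)) ≠ 1)
    (y : ℕ → ℂ)
    (hrec : ∀ m : ℕ, y (m + 1) =
      y m + (Δs : ℂ) * ∑ j, (b j : ℂ) * Λ (((m : ℝ) + c j) * Δs))
    (n : ℕ) (hn : 0 < n) :
    y (n * M) = y 0 + ∫ s in (0:ℝ)..(2 * π * n), Λ s :=
  rk_exact_trig_poly_periods_general K a Λ hΛ M hM Δs hΔs σ b c hconsistent halias y hrec n
end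

section
/- Let Λ : ℝ → ℂ be a trigonometric polynomial, Λ(s) = ∑_{k ∈ K} a_k exp(i k s), where K is a finite set of integers and a_k ∈ ℂ. Let M be a positive integer, Δs = 2π/M, and let b_1,…,b_σ, c_1,…,c_σ ∈ ℝ be the weights and abscissas of a consistent Runge–Kutta method (∑_{j=1}^σ b_j = 1). Assume that for every nonzero k ∈ K one has exp(i k Δs) ≠ 1. Then the backward Runge–Kutta quadrature approximation defined by y_{-(m+1)} = y_{-m} − Δs ∑_{j=1}^σ b_j Λ(−(m + c_j)Δs), starting from a given y_0, satisfies y_{-M} = y_0 + ∫_0^{−2π} Λ(s) ds = y_0 − ∫_{−2π}^{0} Λ(s) ds; that is, the backward numerical integration over one period is exact at s = −2π. -/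
/-!
Both the Runge–Kutta sum and the integral are linear in `Λ`, so it suffices to treat a single
mode `s ↦ exp (i k s)`. For `k = 0` both give `2π`, the Runge–Kutta sum because `∑ b_j = 1`.
For `k ≠ 0` the integral over a full period vanishes, and for each stage `j` the samples
`exp (-i k (m + c_j) Δs)`, `m < M`, form a geometric progression with ratio `ζ⁻¹`, where
`ζ = exp (i k Δs)`; since `ζ ^ M = 1` and, by the no-aliasing hypothesis, `ζ ≠ 1`, its sum
vanishes too.
-/

open Real Complex Finset

lemma geom_sum_eq_zero_of_pow_eq_one_s3 {F : Type*} [DivisionRing F] {ζ : F} {M : ℕ} (hζM : ζ ^ M = 1)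
    (hζ : ζ ≠ 1) : ∑ m ∈ range M, ζ ^ m = 0 := by
  rw [geom_sum_eq hζ, hζM, sub_self, zero_div]

lemma exp_I_int_mul_pow_eq_one (k : ℤ) {Δs : ℝ} {M : ℕ} (hΔs : Δs * M = 2 * π) :
    Complex.exp (I * k * Δs) ^ M = 1 := by
  have hΔs' : (Δs : ℂ) * M = 2 * π := by exact_mod_cast hΔs
  rw [← Complex.exp_nat_mul, show (M : ℂ) * (I * k * Δs) = k * (2 * π * I) by
    linear_combination (I * k) * hΔs', exp_int_mul_two_pi_mul_I]

lemma sum_range_exp_I_int_mul_eq_zero (k : ℤ) {Δs : ℝ} {M : ℕ} (hΔs : Δs * M = 2 * π)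
    (halias : Complex.exp (I * k * Δs) ≠ 1) (c : ℝ) :
    ∑ m ∈ range M, Complex.exp (I * k * ↑(-(((m : ℝ) + c) * Δs))) = 0 := by
  set ζ := Complex.exp (I * k * Δs)
  have hterm (m : ℕ) :
      Complex.exp (I * k * ↑(-(((m : ℝ) + c) * Δs))) =
        Complex.exp (-(I * k * c * Δs)) * ζ⁻¹ ^ m := by
    rw [inv_pow, ← Complex.exp_nat_mul, ← Complex.exp_neg, ← Complex.exp_add]
    push_cast
    ring_nf
  have hζM : ζ⁻¹ ^ M = 1 := by rw [inv_pow, exp_I_int_mul_pow_eq_one k hΔs, inv_one]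
  simp_rw [hterm, ← mul_sum, geom_sum_eq_zero_of_pow_eq_one_s3 hζM (inv_ne_one.mpr halias), mul_zero]

lemma integral_exp_I_int_mul_of_sub_eq_two_pi (k : ℤ) {a b : ℝ} (hab : b - a = 2 * π) :
    ∫ s in a..b, Complex.exp (I * k * s) = if k = 0 then (2 * π : ℂ) else 0 := by
  rcases eq_or_ne k 0 with rfl | hk
  · simp [intervalIntegral.integral_const, hab]
  · have hIk : I * k ≠ 0 := by simp [hk]
    have hperiod : Complex.exp (I * k * b) = Complex.exp (I * k * a) := by
      rw [show b = a + 2 * π by linarith]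
      push_cast
      rw [show I * k * (a + 2 * π) = I * k * a + k * (2 * π * I) by ring, Complex.exp_add,
        exp_int_mul_two_pi_mul_I, mul_one]
    rw [integral_exp_mul_complex hIk, hperiod, sub_self, zero_div, if_neg hk]

lemma integral_finset_sum_mul_exp_I_int_mul (K : Finset ℤ) (a : ℤ → ℂ) (x y : ℝ) :
    ∫ s in x..y, ∑ k ∈ K, a k * Complex.exp (I * k * s) =
      ∑ k ∈ K, a k * ∫ s in x..y, Complex.exp (I * k * s) := by
  rw [intervalIntegral.integral_finsetSum fun k _ =>
    (by fun_prop : Continuous _).intervalIntegrable _ _]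
  simp_rw [intervalIntegral.integral_const_mul]

section BackwardRK

variable {σ : ℕ} (b c : Fin σ → ℝ) (Δs : ℝ)

/-- The total increment `y_0 - y_{-M}` of `M` backward Runge–Kutta steps for `dy/ds = f`. -/
noncomputable def backwardRKSum (M : ℕ) (f : ℝ → ℂ) : ℂ :=
  Δs * ∑ m ∈ range M, ∑ j, (b j : ℂ) * f (-(((m : ℝ) + c j) * Δs))

lemma eq_sub_backwardRKSum_of_rec (f : ℝ → ℂ) (z : ℕ → ℂ)
    (hrec : ∀ m : ℕ, z (m + 1) = z m - (Δs : ℂ) * ∑ j, (b j : ℂ) * f (-(((m : ℝ) + c j) * Δs)))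
    (n : ℕ) : z n = z 0 - backwardRKSum b c Δs n f := by
  induction n with
  | zero => simp [backwardRKSum]
  | succ n ih => rw [hrec, ih, backwardRKSum, backwardRKSum, sum_range_succ]; ring

lemma backwardRKSum_sum_mul {ι : Type*} (M : ℕ) (K : Finset ι) (a : ι → ℂ) (f : ι → ℝ → ℂ) :
    backwardRKSum b c Δs M (fun s => ∑ k ∈ K, a k * f k s) =
      ∑ k ∈ K, a k * backwardRKSum b c Δs M (f k) := by
  simp only [backwardRKSum, mul_sum]
  refine (sum_congr rfl fun m _ => sum_comm).trans (sum_comm.trans ?_)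
  refine sum_congr rfl fun k _ => sum_congr rfl fun m _ => sum_congr rfl fun j _ => ?_
  ring

lemma backwardRKSum_exp_I_int_mul {M : ℕ} (hΔs : Δs * M = 2 * π) (hb : ∑ j, b j = 1) (k : ℤ)
    (halias : k ≠ 0 → Complex.exp (I * k * Δs) ≠ 1) :
    backwardRKSum b c Δs M (fun s => Complex.exp (I * k * s)) =
      if k = 0 then (2 * π : ℂ) else 0 := by
  rcases eq_or_ne k 0 with rfl | hk
  · have hb' : ∑ j, (b j : ℂ) = 1 := by exact_mod_cast hb
    have hΔs' : (Δs : ℂ) * M = 2 * π := by exact_mod_cast hΔs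
    simp [backwardRKSum, hb', hΔs']
  · rw [backwardRKSum, sum_comm, if_neg hk]
    simp_rw [← mul_sum, sum_range_exp_I_int_mul_eq_zero k hΔs (halias hk), mul_zero, sum_const_zero,
      mul_zero]

end BackwardRK

theorem rk_backward_exact_trig_poly_general (K : Finset ℤ) (a : ℤ → ℂ)
    (Λ : ℝ → ℂ)
    (hΛ : ∀ s : ℝ, Λ s = ∑ k ∈ K, a k * Complex.exp (Complex.I * (k : ℂ) * (s : ℂ)))
    (M : ℕ) (hM : 0 < M) (Δs : ℝ) (hΔs : Δs = 2 * π / M)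
    (σ : ℕ) (b c : Fin σ → ℝ)
    (hconsistent : ∑ j, b j = 1)
    (halias : ∀ k ∈ K, k ≠ 0 → Complex.exp (Complex.I * (k : ℂ) * (Δs : ℂ)) ≠ 1)
    (z : ℕ → ℂ)  -- `z m` stands for `y_{-m}`
    (hrec : ∀ m : ℕ, z (m + 1) =
      z m - (Δs : ℂ) * ∑ j, (b j : ℂ) * Λ (-(((m : ℝ) + c j) * Δs))) :
    z M = z 0 + ∫ s in (0:ℝ)..(-(2 * π)), Λ s ∧
    z M = z 0 - ∫ s in (-(2 * π))..(0:ℝ), Λ s := by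
  have hΔsM : Δs * M = 2 * π := by
    rw [hΔs]
    field_simp [hM.ne']
  have hexact : backwardRKSum b c Δs M Λ = ∫ s in (-(2 * π))..0, Λ s := by
    rw [funext hΛ, backwardRKSum_sum_mul, integral_finset_sum_mul_exp_I_int_mul]
    refine sum_congr rfl fun k hk => ?_
    rw [backwardRKSum_exp_I_int_mul b c Δs hΔsM hconsistent k (halias k hk),
      integral_exp_I_int_mul_of_sub_eq_two_pi k (by ring)]
  have hzM := eq_sub_backwardRKSum_of_rec b c Δs Λ z hrec M
  rw [hexact] at hzM
  exact ⟨by rw [hzM, intervalIntegral.integral_symm]; ring, hzM⟩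

/-- For a trigonometric polynomial `Λ`, the backward Runge–Kutta quadrature
`y_{-(m+1)} = y_{-m} − Δs ∑_j b_j Λ(−(m+c_j)Δs)` with step `Δs = 2π/M` avoiding aliasing
is exact at `s = −2π`: writing `z m` for `y_{-m}`,
`z M = z 0 + ∫_0^{−2π} Λ = z 0 − ∫_{−2π}^0 Λ`. -/
theorem rk_backward_exact_trig_poly (K : Finset ℤ) (a : ℤ → ℂ)
    (Λ : ℝ → ℂ)
    (hΛ : ∀ s : ℝ, Λ s = ∑ k ∈ K, a k * Complex.exp (Complex.I * (k : ℂ) * (s : ℂ)))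
    (M : ℕ) (hM : 0 < M) (Δs : ℝ) (hΔs : Δs = 2 * π / M)
    (σ : ℕ) (hσ : 0 < σ) (b c : Fin σ → ℝ)
    (hconsistent : ∑ j, b j = 1)
    (halias : ∀ k ∈ K, k ≠ 0 → Complex.exp (Complex.I * (k : ℂ) * (Δs : ℂ)) ≠ 1)
    (z : ℕ → ℂ)  -- `z m` stands for `y_{-m}`
    (hrec : ∀ m : ℕ, z (m + 1) =
      z m - (Δs : ℂ) * ∑ j, (b j : ℂ) * Λ (-(((m : ℝ) + c j) * Δs))) :
    z M = z 0 + ∫ s in (0:ℝ)..(-(2 * π)), Λ s ∧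
    z M = z 0 - ∫ s in (-(2 * π))..(0:ℝ), Λ s :=
  rk_backward_exact_trig_poly_general K a Λ hΛ M hM Δs hΔs σ b c hconsistent halias z hrec
end
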